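/- Let μ be a directed distance on a nonempty finite set S. There exists a map φ : T_μ → Q_μ^+ such that (1) φ(p) = p for all p ∈ Q_μ^+, and (2) D_∞(φ(C)) ≤ D_∞(C) for every cycle C in T_μ (φ is cyclically nonexpansive). -/

import Mathlib

open scoped BigOperators

/-- Points of `ℝ^{S^{cr}}`: pairs `p = (p^c, p^r)` of functions `S → ℝ`,
with the componentwise partial order (the product/pi order). -/
abbrev Pt (S : Type*) := (S → ℝ) × (S → ℝ)

/-- `μ` is a directed distance: nonnegative with zero diagonal. -/
def DirDist {S : Type*} (μ : S → S → ℝ) : Prop :=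
  (∀ s t, 0 ≤ μ s t) ∧ (∀ s, μ s s = 0)

/-- `d` is a directed metric: a directed distance satisfying the triangle inequality. -/
def DirMetric {V : Type*} (d : V → V → ℝ) : Prop :=
  DirDist d ∧ ∀ x y z, d x z ≤ d x y + d y z

/-- The polyhedron `Π_μ`. -/
def PiP {S : Type*} (μ : S → S → ℝ) : Set (Pt S) :=
  {p | ∀ s t, μ s t ≤ p.1 s + p.2 t}

/-- The polyhedron `P_μ = Π_μ ∩ ℝ_+^{S^{cr}}`. -/
def PP {S : Type*} (μ : S → S → ℝ) : Set (Pt S) :=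
  {p ∈ PiP μ | 0 ≤ p}

/-- The directed tight span `T_μ`: minimal elements of `P_μ`. -/
def TT {S : Type*} (μ : S → S → ℝ) : Set (Pt S) :=
  {p ∈ PP μ | ∀ q ∈ PP μ, q ≤ p → q = p}

/-- `Q_μ`: minimal elements of `Π_μ`. -/
def QQ {S : Type*} (μ : S → S → ℝ) : Set (Pt S) :=
  {p ∈ PiP μ | ∀ q ∈ PiP μ, q ≤ p → q = p}

/-- `Q_μ^+ = Q_μ ∩ ℝ_+^{S^{cr}}`. -/
def QP {S : Type*} (μ : S → S → ℝ) : Set (Pt S) :=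
  QQ μ ∩ {p | 0 ≤ p}

/-- `D_∞^+(f,g) = max_x (g(x) - f(x))_+`. -/
noncomputable def Dplus {X : Type*} [Fintype X] (f g : X → ℝ) : ℝ :=
  ⨆ x, max (g x - f x) 0

/-- `D_∞(p,q) = max ( D_∞^+(p^c,q^c), D_∞^+(q^r,p^r) )`. -/
noncomputable def Dinf {S : Type*} [Fintype S] (p q : Pt S) : ℝ :=
  max (Dplus p.1 q.1) (Dplus q.2 p.2)

/-- A subset `R` is balanced if no pair `p, q ∈ R` satisfies `p^c < q^c`,
and no pair satisfies `p^r < q^r`. -/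
def BalancedSet {S : Type*} (R : Set (Pt S)) : Prop :=
  (¬ ∃ p ∈ R, ∃ q ∈ R, ∀ s, p.1 s < q.1 s) ∧
  (¬ ∃ p ∈ R, ∃ q ∈ R, ∀ s, p.2 s < q.2 s)

/-- The vector `e = (1, -1)` spanning the linearity space of `Π_μ`. -/
def eVec (S : Type*) : Pt S := (fun _ => 1, fun _ => -1)

/-- `R ⊆ Q_μ` is a section: every point of `Q_μ` differs from exactly one point
of `R` by a multiple of `e`. -/
def IsSection {S : Type*} (μ : S → S → ℝ) (R : Set (Pt S)) : Prop :=
  R ⊆ QQ μ ∧ ∀ q ∈ QQ μ, ∃! p, p ∈ R ∧ ∃ α : ℝ, q - p = α • eVec S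

/-- The length of the cycle `(x 0, x 1, …, x m)` with respect to `d`. -/
def cycLen {V : Type*} (d : V → V → ℝ) (m : ℕ) (x : Fin (m + 1) → V) : ℝ :=
  ∑ i, d (x i) (x (i + 1))


/-!
The conjugation `p ↦ (*(p^c*), p^c*)`, with `c*(t) = max_s (μ(s,t) - c(s))` and
`*r(s) = max_t (μ(s,t) - r(t))`, retracts `ℝ^{S^{cr}}` onto `Q_μ`; it is nonexpansive for `D_∞`
because conjugation reverses the order and commutes with adding constants.
A point `q ∈ Q_μ` is then moved along `e = (1, -1)` by the amount `α(q)` obtained by clamping `0`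
to the interval `[max_s -q^c(s), min_t q^r(t)]` of shifts that make it nonnegative (nonempty
because `μ ≥ 0`). This shift is not nonexpansive, but along each step `q → q'` it increases
`D_∞` by at most `α(q') - α(q)`, and these increments telescope to `0` around a cycle.
-/

section Dist

lemma Dplus_nonneg {X : Type*} [Fintype X] (f g : X → ℝ) : 0 ≤ Dplus f g :=
  Real.iSup_nonneg fun _ => le_max_right _ _

lemma sub_le_Dplus {X : Type*} [Fintype X] (f g : X → ℝ) (x : X) : g x - f x ≤ Dplus f g :=
  (le_max_left _ _).trans
    (le_ciSup (f := fun x => max (g x - f x) 0) (Set.finite_range _).bddAbove x)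

lemma Dplus_le {X : Type*} [Fintype X] {f g : X → ℝ} {d : ℝ} (hd : 0 ≤ d)
    (h : ∀ x, g x - f x ≤ d) : Dplus f g ≤ d :=
  Real.iSup_le (fun x => max_le (h x) hd) hd

variable {S : Type*} [Fintype S]

lemma Dinf_nonneg (p q : Pt S) : 0 ≤ Dinf p q :=
  (Dplus_nonneg _ _).trans (le_max_left _ _)

lemma sub_fst_le_Dinf (p q : Pt S) (s : S) : q.1 s - p.1 s ≤ Dinf p q :=
  (sub_le_Dplus _ _ s).trans (le_max_left _ _)

lemma sub_snd_le_Dinf (p q : Pt S) (s : S) : p.2 s - q.2 s ≤ Dinf p q :=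
  (sub_le_Dplus _ _ s).trans (le_max_right _ _)

lemma Dinf_le {p q : Pt S} {d : ℝ} (hd : 0 ≤ d) (hc : ∀ s, q.1 s - p.1 s ≤ d)
    (hr : ∀ s, p.2 s - q.2 s ≤ d) : Dinf p q ≤ d :=
  max_le (Dplus_le hd hc) (Dplus_le hd hr)

end Dist

lemma cycLen_le_of_le_add_sub {V : Type*} {d : V → V → ℝ} {m : ℕ} {x y : Fin (m + 1) → V}
    (a : Fin (m + 1) → ℝ)
    (h : ∀ i, d (y i) (y (i + 1)) ≤ d (x i) (x (i + 1)) + (a (i + 1) - a i)) :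
    cycLen d m y ≤ cycLen d m x := by
  have telescope : ∑ i, (a (i + 1) - a i) = 0 := by
    rw [Finset.sum_sub_distrib, sub_eq_zero]
    exact Fintype.sum_equiv (Equiv.addRight 1) (fun i => a (i + 1)) a fun _ => rfl
  calc cycLen d m y ≤ ∑ i, (d (x i) (x (i + 1)) + (a (i + 1) - a i)) :=
        Finset.sum_le_sum fun i _ => h i
    _ = cycLen d m x := by rw [Finset.sum_add_distrib, telescope, add_zero, cycLen]

section Conjugate

variable {S : Type*} (μ : S → S → ℝ)

noncomputable def rstar (c : S → ℝ) : S → ℝ := fun t => ⨆ s, μ s t - c s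

noncomputable def lstar (r : S → ℝ) : S → ℝ := fun s => ⨆ t, μ s t - r t

noncomputable def retractQ (p : Pt S) : Pt S := (lstar μ (rstar μ p.1), rstar μ p.1)

lemma sub_le_rstar [Finite S] (c : S → ℝ) (s t : S) : μ s t - c s ≤ rstar μ c t :=
  le_ciSup (f := fun s => μ s t - c s) (Set.finite_range _).bddAbove s

lemma sub_le_lstar [Finite S] (r : S → ℝ) (s t : S) : μ s t - r t ≤ lstar μ r s :=
  le_ciSup (f := fun t => μ s t - r t) (Set.finite_range _).bddAbove t

variable {μ}

lemma rstar_le {c : S → ℝ} {t : S} {b : ℝ} (h : ∀ s, μ s t ≤ c s + b) : rstar μ c t ≤ b :=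
  have : Nonempty S := ⟨t⟩
  ciSup_le fun s => by linarith [h s]

lemma lstar_le {r : S → ℝ} {s : S} {b : ℝ} (h : ∀ t, μ s t ≤ b + r t) : lstar μ r s ≤ b :=
  have : Nonempty S := ⟨s⟩
  ciSup_le fun t => by linarith [h t]

variable [Finite S]

lemma rstar_le_rstar_add {c c' : S → ℝ} {d : ℝ} (h : ∀ s, c' s ≤ c s + d) (t : S) :
    rstar μ c t ≤ rstar μ c' t + d :=
  rstar_le fun s => by linarith [h s, sub_le_rstar μ c' s t]

lemma lstar_le_lstar_add {r r' : S → ℝ} {d : ℝ} (h : ∀ t, r' t ≤ r t + d) (s : S) :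
    lstar μ r s ≤ lstar μ r' s + d :=
  lstar_le fun t => by linarith [h t, sub_le_lstar μ r' s t]

lemma rstar_lstar_rstar (c : S → ℝ) : rstar μ (lstar μ (rstar μ c)) = rstar μ c := by
  funext t
  refine le_antisymm (rstar_le fun s => by linarith [sub_le_lstar μ (rstar μ c) s t]) ?_
  have hlc : ∀ s, lstar μ (rstar μ c) s ≤ c s + 0 := fun s =>
    lstar_le fun t => by linarith [sub_le_rstar μ c s t]
  simpa only [add_zero] using rstar_le_rstar_add hlc t

lemma retractQ_mem_QQ (p : Pt S) : retractQ μ p ∈ QQ μ := by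
  refine ⟨fun s t => by dsimp only [retractQ]; linarith [sub_le_lstar μ (rstar μ p.1) s t], ?_⟩
  rintro q hq ⟨hc, hr⟩
  have hc' : q.1 = lstar μ (rstar μ p.1) := funext fun s =>
    le_antisymm (hc s) <| lstar_le fun t =>
      (hq s t).trans (by dsimp only [retractQ] at hr; linarith [hr t])
  have hr' : q.2 = rstar μ p.1 := funext fun t => by
    refine le_antisymm (hr t) ?_
    rw [← rstar_lstar_rstar p.1, ← hc']
    exact rstar_le fun s => hq s t
  exact Prod.ext hc' hr'

lemma retractQ_of_mem_QQ {q : Pt S} (hq : q ∈ QQ μ) : retractQ μ q = q := by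
  have hr : rstar μ q.1 = q.2 := congrArg Prod.snd <|
    hq.2 (q.1, rstar μ q.1) (fun s t => by dsimp only; linarith [sub_le_rstar μ q.1 s t])
      ⟨le_rfl, fun t => rstar_le fun s => hq.1 s t⟩
  have hc : lstar μ q.2 = q.1 := congrArg Prod.fst <|
    hq.2 (lstar μ q.2, q.2) (fun s t => by dsimp only; linarith [sub_le_lstar μ q.2 s t])
      ⟨fun s => lstar_le fun t => hq.1 s t, le_rfl⟩
  rw [retractQ, hr, hc]

end Conjugate

lemma Dinf_retractQ_le {S : Type*} [Fintype S] (μ : S → S → ℝ) (p q : Pt S) :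
    Dinf (retractQ μ p) (retractQ μ q) ≤ Dinf p q := by
  have hc : ∀ s, q.1 s ≤ p.1 s + Dinf p q := fun s => by linarith [sub_fst_le_Dinf p q s]
  have hr := rstar_le_rstar_add (μ := μ) hc
  exact Dinf_le (Dinf_nonneg p q) (fun s => sub_le_iff_le_add'.2 (lstar_le_lstar_add hr s))
    (fun t => sub_le_iff_le_add'.2 (hr t))

section Shift

variable {S : Type*}

@[simp]
lemma add_smul_eVec_fst (q : Pt S) (α : ℝ) (s : S) : (q + α • eVec S).1 s = q.1 s + α := by
  simp [eVec]

@[simp]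
lemma add_smul_eVec_snd (q : Pt S) (α : ℝ) (t : S) : (q + α • eVec S).2 t = q.2 t - α := by
  simp [eVec, sub_eq_add_neg]

lemma add_smul_eVec_mem_PiP {μ : S → S → ℝ} {q : Pt S} (α : ℝ) (hq : q ∈ PiP μ) :
    q + α • eVec S ∈ PiP μ := fun s t => by
  simp only [add_smul_eVec_fst, add_smul_eVec_snd]
  linarith [hq s t]

lemma add_smul_eVec_mem_QQ {μ : S → S → ℝ} {q : Pt S} (α : ℝ) (hq : q ∈ QQ μ) :
    q + α • eVec S ∈ QQ μ := by
  refine ⟨add_smul_eVec_mem_PiP α hq.1, fun q' hq' hle => ?_⟩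
  have h : q' + (-α) • eVec S = q :=
    hq.2 _ (add_smul_eVec_mem_PiP _ hq') (by rwa [neg_smul, ← sub_eq_add_neg, sub_le_iff_le_add])
  rw [← h, add_assoc, ← add_smul, neg_add_cancel, zero_smul, add_zero]

noncomputable def nonnegShift (q : Pt S) : ℝ := max (⨆ s, -q.1 s) (min 0 (⨅ t, q.2 t))

noncomputable def shiftToNonneg (q : Pt S) : Pt S := q + nonnegShift q • eVec S

lemma neg_fst_le_nonnegShift [Finite S] (q : Pt S) (s : S) : -q.1 s ≤ nonnegShift q :=
  (le_ciSup (f := fun s => -q.1 s) (Set.finite_range _).bddAbove s).trans (le_max_left _ _)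

lemma nonnegShift_le_snd [Finite S] {μ : S → S → ℝ} (hμ : ∀ s t, 0 ≤ μ s t) {q : Pt S}
    (hq : q ∈ PiP μ) (t : S) : nonnegShift q ≤ q.2 t :=
  have : Nonempty S := ⟨t⟩
  max_le (ciSup_le fun s => by linarith [hμ s t, hq s t])
    ((min_le_right _ _).trans (ciInf_le (f := q.2) (Set.finite_range _).bddBelow t))

lemma shiftToNonneg_nonneg [Finite S] {μ : S → S → ℝ} (hμ : ∀ s t, 0 ≤ μ s t) {q : Pt S}
    (hq : q ∈ PiP μ) : 0 ≤ shiftToNonneg q :=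
  ⟨fun s => by
    simp only [shiftToNonneg, add_smul_eVec_fst, Prod.fst_zero, Pi.zero_apply]
    linarith [neg_fst_le_nonnegShift q s],
   fun t => by
    simp only [shiftToNonneg, add_smul_eVec_snd, Prod.snd_zero, Pi.zero_apply]
    linarith [nonnegShift_le_snd hμ hq t]⟩

lemma nonnegShift_eq_zero {q : Pt S} (hq : 0 ≤ q) : nonnegShift q = 0 := by
  have hL : ⨆ s, -q.1 s ≤ 0 := Real.iSup_le (fun s => neg_nonpos.2 (hq.1 s)) le_rfl
  have hU : 0 ≤ ⨅ t, q.2 t := Real.iInf_nonneg hq.2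
  rw [nonnegShift, min_eq_left hU, max_eq_right hL]

lemma shiftToNonneg_of_nonneg {q : Pt S} (hq : 0 ≤ q) : shiftToNonneg q = q := by
  rw [shiftToNonneg, nonnegShift_eq_zero hq, zero_smul, add_zero]

variable [Fintype S]

lemma nonnegShift_sub_le_Dinf [Nonempty S] (q q' : Pt S) :
    nonnegShift q - nonnegShift q' ≤ Dinf q q' := by
  have hL : ⨆ s, -q.1 s ≤ (⨆ s, -q'.1 s) + Dinf q q' := ciSup_le fun s => by
    linarith [sub_fst_le_Dinf q q' s,
      le_ciSup (f := fun s => -q'.1 s) (Set.finite_range _).bddAbove s]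
  have hU : ⨅ t, q.2 t ≤ (⨅ t, q'.2 t) + Dinf q q' := by
    rw [← sub_le_iff_le_add]
    exact le_ciInf fun t => by
      linarith [sub_snd_le_Dinf q q' t, ciInf_le (f := q.2) (Set.finite_range _).bddBelow t]
  have hmin : min 0 (⨅ t, q.2 t) ≤ min 0 (⨅ t, q'.2 t) + Dinf q q' := by
    rw [← min_add_add_right, zero_add]
    exact min_le_min (Dinf_nonneg q q') hU
  rw [sub_le_iff_le_add', nonnegShift, nonnegShift, ← max_add_add_right]
  exact max_le_max hL hmin

lemma Dinf_add_smul_eVec_le {q q' : Pt S} {α α' : ℝ} (h : α - α' ≤ Dinf q q') :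
    Dinf (q + α • eVec S) (q' + α' • eVec S) ≤ Dinf q q' + (α' - α) :=
  Dinf_le (by linarith)
    (fun s => by
      simp only [add_smul_eVec_fst]
      linarith [sub_fst_le_Dinf q q' s])
    (fun t => by
      simp only [add_smul_eVec_snd]
      linarith [sub_snd_le_Dinf q q' t])

end Shift

/-- Lemma 2.6.  There is a cyclically nonexpansive retraction `φ : T_μ → Q_μ^+`
which is the identity on `Q_μ^+`. -/
theorem stmt4 {S : Type*} [Fintype S] [Nonempty S] (μ : S → S → ℝ)
    (hμ : DirDist μ) :
    ∃ φ : Pt S → Pt S,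
      (∀ p ∈ TT μ, φ p ∈ QP μ) ∧
      (∀ p ∈ QP μ, φ p = p) ∧
      (∀ (m : ℕ) (x : Fin (m + 1) → Pt S), (∀ i, x i ∈ TT μ) →
        cycLen Dinf m (fun i => φ (x i)) ≤ cycLen Dinf m x) := by
  refine ⟨fun p => shiftToNonneg (retractQ μ p), fun p _ => ?_, fun p hp => ?_, fun m x _ => ?_⟩
  · have hq := retractQ_mem_QQ (μ := μ) p
    exact ⟨add_smul_eVec_mem_QQ _ hq, shiftToNonneg_nonneg hμ.1 hq.1⟩
  · dsimp only
    rw [retractQ_of_mem_QQ hp.1, shiftToNonneg_of_nonneg hp.2]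
  · set q := fun i => retractQ μ (x i)
    refine cycLen_le_of_le_add_sub (fun i => nonnegShift (q i)) fun i => ?_
    have hretract := Dinf_retractQ_le μ (x i) (x (i + 1))
    have hshift := Dinf_add_smul_eVec_le (nonnegShift_sub_le_Dinf (q i) (q (i + 1)))
    exact hshift.trans (by linarith)
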